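/- arXiv:math/0410457 — 6 statements merged into one kernel-verified Lean document; each statement's English description precedes it below -/
import Mathlib

section
/- Let m ≥ 1, let φ be an m×m real symmetric positive definite matrix, let B be an m×m real symmetric matrix, and let k be the unique symmetric matrix solving k·φ + φ·k = 2B. Then the value (1/4)·Tr(k·φ·k) is the greatest element of the set { Tr(F·B) − Tr(F·φ·F) : F an m×m real symmetric matrix }, and it is attained at F = k/2. -/
/-!
With `k φ + φ k = 2 B`, completing the square gives, for every `F`,
`Tr(F B) - Tr(F φ F) = ¼ Tr(k φ k) - Tr(G φ G)` where `G = F - k/2`.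
For symmetric `F` the matrix `G` is symmetric, so `G φ G = Gᴴ φ G` is positive semidefinite and
`Tr(G φ G) ≥ 0`, with equality at `F = k/2`.
-/

open Matrix

namespace Matrix

variable {n : Type*} [Fintype n]

theorem PosSemidef.trace_mul_mul_self_nonneg_of_isSymm {R : Type*} [Ring R] [PartialOrder R]
    [StarRing R] [TrivialStar R] [AddLeftMono R] {A G : Matrix n n R} (hA : A.PosSemidef)
    (hG : G.IsSymm) : 0 ≤ (G * A * G).trace := by
  simpa [conjTranspose_eq_transpose_of_trivial, hG.eq] using
    (hA.conjTranspose_mul_mul_same G).trace_nonneg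

variable {𝕜 : Type*} [Field 𝕜] [CharZero 𝕜]

theorem trace_mul_sub_trace_mul_mul_eq_of_lyapunov {φ B k : Matrix n n 𝕜}
    (hkeq : k * φ + φ * k = (2 : 𝕜) • B) (F : Matrix n n 𝕜) :
    (F * B).trace - (F * φ * F).trace
      = (1 / 4) * (k * φ * k).trace
        - ((F - ((1 : 𝕜) / 2) • k) * φ * (F - ((1 : 𝕜) / 2) • k)).trace := by
  have hFB : 2 * (F * B).trace = (k * φ * F).trace + (F * φ * k).trace := by
    rw [← smul_eq_mul, ← trace_smul, ← Matrix.mul_smul, ← hkeq, mul_add, trace_add,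
      trace_mul_comm F, Matrix.mul_assoc F]
  simp only [sub_mul, mul_sub, Matrix.smul_mul, Matrix.mul_smul, trace_sub, trace_smul,
    smul_eq_mul]
  linear_combination (1 / 2 : 𝕜) * hFB

end Matrix

theorem stmt_2_general (m : ℕ) (φ B k : Matrix (Fin m) (Fin m) ℝ)
    (hφ : φ.PosDef)
    (hk : k.IsSymm) (hkeq : k * φ + φ * k = (2 : ℝ) • B) :
    IsGreatest
      { x : ℝ | ∃ F : Matrix (Fin m) (Fin m) ℝ, F.IsSymm ∧
          x = (F * B).trace - (F * φ * F).trace }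
      ((1 / 4) * (k * φ * k).trace) ∧
    ((((1:ℝ)/2) • k) * B).trace - ((((1:ℝ)/2) • k) * φ * (((1:ℝ)/2) • k)).trace
      = (1 / 4) * (k * φ * k).trace := by
  have hvalue := trace_mul_sub_trace_mul_mul_eq_of_lyapunov hkeq
  have hattained : ((((1:ℝ)/2) • k) * B).trace
      - ((((1:ℝ)/2) • k) * φ * (((1:ℝ)/2) • k)).trace = (1 / 4) * (k * φ * k).trace := by
    rw [hvalue]
    simp
  refine ⟨⟨⟨_, hk.smul _, hattained.symm⟩, ?_⟩, hattained⟩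
  rintro _ ⟨F, hF, rfl⟩
  have hG : (F - ((1 : ℝ) / 2) • k).IsSymm := hF.sub (hk.smul _)
  rw [hvalue]
  linarith [hφ.posSemidef.trace_mul_mul_self_nonneg_of_isSymm hG]

theorem stmt_2 (m : ℕ) (hm : 1 ≤ m) (φ B k : Matrix (Fin m) (Fin m) ℝ)
    (hφ : φ.PosDef) (hB : B.IsSymm)
    (hk : k.IsSymm) (hkeq : k * φ + φ * k = (2 : ℝ) • B) :
    IsGreatest
      { x : ℝ | ∃ F : Matrix (Fin m) (Fin m) ℝ, F.IsSymm ∧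
          x = (F * B).trace - (F * φ * F).trace }
      ((1 / 4) * (k * φ * k).trace) ∧
    ((((1:ℝ)/2) • k) * B).trace - ((((1:ℝ)/2) • k) * φ * (((1:ℝ)/2) • k)).trace
      = (1 / 4) * (k * φ * k).trace :=
  stmt_2_general m φ B k hφ hk hkeq
end

section
/- Let m ≥ 1, δ > 0, and let M be an m×m real symmetric positive definite matrix. Define K(M) = (1/2)Tr(M) − (δ/2)·log det(M) − mδ/2 + (mδ/2)·log δ. Then K(M) is the greatest element of the set { Tr(Θ·M) + (δ/2)·log det(I − 2Θ) : Θ an m×m real symmetric matrix such that I − 2Θ is positive definite }, and the supremum is attained at Θ₀ = (1/2)(I − δ·M⁻¹), i.e. at the Θ₀ with M = δ·(I − 2Θ₀)⁻¹. -/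
/-!
Write `A = 1 - 2Θ`, so that the objective is `tr M / 2 - tr (A M) / 2 + (δ/2) log det A`.
For positive definite `A` and `M`, the product `A M` is similar to `A^{1/2} M A^{1/2}`, which is
positive definite, so summing `log λ ≤ λ - 1` over its eigenvalues gives
`log det (A M / δ) ≤ tr (A M / δ) - m`. This is exactly the claimed upper bound, with equality
when `A M / δ = 1`, i.e. at `A = δ M⁻¹`.
-/

open Matrix

namespace Matrix

variable {n : Type*} [Fintype n] [DecidableEq n]

theorem PosDef.log_det_le_trace_sub_card {B : Matrix n n ℝ} (hB : B.PosDef) :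
    Real.log B.det ≤ B.trace - Fintype.card n := by
  have hpos := hB.eigenvalues_pos
  rw [hB.1.det_eq_prod_eigenvalues, hB.1.trace_eq_sum_eigenvalues]
  simp only [RCLike.ofReal_real_eq_id, id_eq]
  rw [Real.log_prod fun i _ => (hpos i).ne', Fintype.card_eq_sum_ones, Nat.cast_sum,
    Nat.cast_one, ← Finset.sum_sub_distrib]
  exact Finset.sum_le_sum fun i _ => Real.log_le_sub_one_of_pos (hpos i)

open scoped MatrixOrder in
theorem PosDef.log_det_mul_le_trace_mul_sub_card {A M : Matrix n n ℝ} (hA : A.PosDef)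
    (hM : M.PosDef) : Real.log (A * M).det ≤ (A * M).trace - Fintype.card n := by
  set S := CFC.sqrt A
  have hS : Sᴴ = S := (CFC.sqrt_nonneg A).posSemidef.1
  have hSS : S * S = A := CFC.sqrt_mul_sqrt_self A hA.posSemidef.nonneg
  have hSdet : IsUnit S.det := by
    refine isUnit_iff_ne_zero.mpr fun h => hA.det_pos.ne' ?_
    rw [← hSS, det_mul, h, zero_mul]
  have hSMS : (S * M * Sᴴ).PosDef :=
    hM.mul_mul_conjTranspose_same <|
      vecMul_injective_iff_isUnit.mpr ((isUnit_iff_isUnit_det S).mpr hSdet)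
  have hdet : (S * M * Sᴴ).det = (A * M).det := by
    rw [hS, det_mul, det_mul, ← hSS, det_mul, det_mul]
    ring
  have htrace : (S * M * Sᴴ).trace = (A * M).trace := by
    rw [hS, trace_mul_cycle, hSS]
  simpa only [hdet, htrace] using hSMS.log_det_le_trace_sub_card

theorem trace_mul_add_log_det_one_sub_two_smul_le {δ : ℝ} (hδ : 0 < δ) {M Θ : Matrix n n ℝ}
    (hM : M.PosDef) (hΘ : (1 - (2 : ℝ) • Θ).PosDef) :
    (Θ * M).trace + δ / 2 * Real.log (1 - (2 : ℝ) • Θ).det ≤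
      1 / 2 * M.trace - δ / 2 * Real.log M.det - Fintype.card n * δ / 2
        + Fintype.card n * δ / 2 * Real.log δ := by
  set A := 1 - (2 : ℝ) • Θ
  have hΘM : (Θ * M).trace = (M.trace - (A * M).trace) / 2 := by
    simp only [A, sub_mul, one_mul, smul_mul, trace_sub, trace_smul, smul_eq_mul]
    ring
  have hAM := hΘ.log_det_mul_le_trace_mul_sub_card (hM.smul (inv_pos.mpr hδ))
  rw [mul_smul_comm, det_smul, trace_smul, smul_eq_mul, det_mul,
    Real.log_mul (by positivity) (mul_pos hΘ.det_pos hM.det_pos).ne', Real.log_pow,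
    Real.log_inv, Real.log_mul hΘ.det_pos.ne' hM.det_pos.ne'] at hAM
  rw [hΘM]
  linear_combination (δ / 2) * hAM + ((A * M).trace / 2) * mul_inv_cancel₀ hδ.ne'

theorem trace_mul_add_log_det_at_optimum {δ : ℝ} (hδ : 0 < δ) {M : Matrix n n ℝ}
    (hM : M.PosDef) :
    (((1 : ℝ) / 2) • (1 - δ • M⁻¹) * M).trace + δ / 2 * Real.log (δ • M⁻¹).det =
      1 / 2 * M.trace - δ / 2 * Real.log M.det - Fintype.card n * δ / 2
        + Fintype.card n * δ / 2 * Real.log δ := by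
  rw [smul_mul, sub_mul, smul_mul, nonsing_inv_mul _ hM.det_pos.ne'.isUnit, one_mul, trace_smul,
    trace_sub, trace_smul, trace_one, det_smul, det_nonsing_inv, Ring.inverse_eq_inv',
    Real.log_mul (by positivity) (inv_pos.mpr hM.det_pos).ne', Real.log_pow, Real.log_inv]
  simp only [smul_eq_mul]
  ring

end Matrix

theorem stmt_11_general (m : ℕ) (δ : ℝ) (hδ : 0 < δ)
    (M : Matrix (Fin m) (Fin m) ℝ) (hM : M.PosDef) :
    IsGreatest
      { x : ℝ | ∃ Θ : Matrix (Fin m) (Fin m) ℝ, Θ.IsSymm ∧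
          ((1 : Matrix (Fin m) (Fin m) ℝ) - (2:ℝ) • Θ).PosDef ∧
          x = (Θ * M).trace + (δ / 2) * Real.log ((1 : Matrix (Fin m) (Fin m) ℝ) - (2:ℝ) • Θ).det }
      ((1 / 2) * M.trace - (δ / 2) * Real.log M.det - m * δ / 2 + (m * δ / 2) * Real.log δ) ∧
    (((1:ℝ)/2) • ((1 : Matrix (Fin m) (Fin m) ℝ) - δ • M⁻¹)).IsSymm ∧
    ((1 : Matrix (Fin m) (Fin m) ℝ)
        - (2:ℝ) • (((1:ℝ)/2) • ((1 : Matrix (Fin m) (Fin m) ℝ) - δ • M⁻¹))).PosDef ∧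
    M = δ • ((1 : Matrix (Fin m) (Fin m) ℝ)
        - (2:ℝ) • (((1:ℝ)/2) • ((1 : Matrix (Fin m) (Fin m) ℝ) - δ • M⁻¹)))⁻¹ ∧
    ((((1:ℝ)/2) • ((1 : Matrix (Fin m) (Fin m) ℝ) - δ • M⁻¹)) * M).trace
        + (δ / 2) * Real.log ((1 : Matrix (Fin m) (Fin m) ℝ)
            - (2:ℝ) • (((1:ℝ)/2) • ((1 : Matrix (Fin m) (Fin m) ℝ) - δ • M⁻¹))).det
      = (1 / 2) * M.trace - (δ / 2) * Real.log M.det - m * δ / 2 + (m * δ / 2) * Real.log δ := by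
  have hΘ₀ : (1 : Matrix (Fin m) (Fin m) ℝ) - (2 : ℝ) • (((1 : ℝ) / 2) • (1 - δ • M⁻¹)) =
      δ • M⁻¹ := by
    rw [smul_smul]
    norm_num
  have hsymm : (((1 : ℝ) / 2) • ((1 : Matrix (Fin m) (Fin m) ℝ) - δ • M⁻¹)).IsSymm :=
    .smul (isSymm_one.sub (.smul (isHermitian_iff_isSymm.mp hM.inv.1) δ)) _
  have hpos : (δ • M⁻¹).PosDef := hM.inv.smul hδ
  have hinv : (δ • M⁻¹)⁻¹ = δ⁻¹ • M := inv_eq_left_inv <| by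
    rw [smul_mul_smul, inv_mul_cancel₀ hδ.ne', one_smul, mul_nonsing_inv _ hM.det_pos.ne'.isUnit]
  have hval := trace_mul_add_log_det_at_optimum hδ hM
  rw [Fintype.card_fin] at hval
  rw [hΘ₀, hinv, smul_smul, mul_inv_cancel₀ hδ.ne', one_smul]
  refine ⟨⟨⟨_, hsymm, by rwa [hΘ₀], by rw [hΘ₀, hval]⟩, ?_⟩, hsymm, hpos, rfl, hval⟩
  rintro x ⟨Θ, -, hΘ, rfl⟩
  simpa only [Fintype.card_fin] using trace_mul_add_log_det_one_sub_two_smul_le hδ hM hΘ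

theorem stmt_11 (m : ℕ) (hm : 1 ≤ m) (δ : ℝ) (hδ : 0 < δ)
    (M : Matrix (Fin m) (Fin m) ℝ) (hM : M.PosDef) :
    IsGreatest
      { x : ℝ | ∃ Θ : Matrix (Fin m) (Fin m) ℝ, Θ.IsSymm ∧
          ((1 : Matrix (Fin m) (Fin m) ℝ) - (2:ℝ) • Θ).PosDef ∧
          x = (Θ * M).trace + (δ / 2) * Real.log ((1 : Matrix (Fin m) (Fin m) ℝ) - (2:ℝ) • Θ).det }
      ((1 / 2) * M.trace - (δ / 2) * Real.log M.det - m * δ / 2 + (m * δ / 2) * Real.log δ) ∧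
    (((1:ℝ)/2) • ((1 : Matrix (Fin m) (Fin m) ℝ) - δ • M⁻¹)).IsSymm ∧
    ((1 : Matrix (Fin m) (Fin m) ℝ)
        - (2:ℝ) • (((1:ℝ)/2) • ((1 : Matrix (Fin m) (Fin m) ℝ) - δ • M⁻¹))).PosDef ∧
    M = δ • ((1 : Matrix (Fin m) (Fin m) ℝ)
        - (2:ℝ) • (((1:ℝ)/2) • ((1 : Matrix (Fin m) (Fin m) ℝ) - δ • M⁻¹)))⁻¹ ∧
    ((((1:ℝ)/2) • ((1 : Matrix (Fin m) (Fin m) ℝ) - δ • M⁻¹)) * M).trace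
        + (δ / 2) * Real.log ((1 : Matrix (Fin m) (Fin m) ℝ)
            - (2:ℝ) • (((1:ℝ)/2) • ((1 : Matrix (Fin m) (Fin m) ℝ) - δ • M⁻¹))).det
      = (1 / 2) * M.trace - (δ / 2) * Real.log M.det - m * δ / 2 + (m * δ / 2) * Real.log δ :=
  stmt_11_general m δ hδ M hM
end

section
/- Let m ≥ 1, δ > 0, and let M be an m×m real symmetric positive definite matrix. Define φ(t) = δt·I + t²·(M − δ·I) for t ∈ [0,1] and k(t) = 2(M − δ·I)·(δ·I + t(M − δ·I))⁻¹ for t ∈ (0,1]. Then: (i) for every t ∈ (0,1], δ·I + t(M − δ·I) is positive definite (hence invertible) and φ(t) is positive definite; (ii) k(t) is symmetric and satisfies k(t)·φ(t) + φ(t)·k(t) = 2(φ'(t) − δ·I), where φ'(t) = δ·I + 2t·(M − δ·I); (iii) (1/8)∫₀¹ Tr(k(t)·φ(t)·k(t)) dt = (1/2)Tr(M) − (δ/2)·log det(M) − mδ/2 + (mδ/2)·log δ. -/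
/-!
Put `A = M - δ • 1` and `B t = δ • 1 + t • A = (1 - t) • δ • 1 + t • M`. As a convex combination
of `δ • 1` and `M`, `B t` is positive definite, and `φ t = t • B t`, which gives (i). Since
`k t = 2 • (A * (B t)⁻¹)` and `A` commutes with `B t`, hence with its inverse, (ii) is algebra.
Using `t • A = B t - δ • 1`, the integrand collapses to `Tr (k φ k) = 4 Tr A - 4 δ Tr (A (B t)⁻¹)`,
and diagonalising `M` with eigenvalues `μ i` turns `Tr (A (B t)⁻¹)` into
`∑ i, (μ i - δ) / (δ + t (μ i - δ))`, the derivative of `∑ i, log (δ + t (μ i - δ))`; its integral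
over `[0, 1]` is `log det M - m log δ`.
-/

open Matrix

theorem add_mul_pos_of_mem_Icc {a b t : ℝ} (hb : 0 < b) (hab : 0 < b + a)
    (ht : t ∈ Set.Icc (0 : ℝ) 1) : 0 < b + t * a := by
  obtain ⟨ht₀, ht₁⟩ := ht
  rcases le_or_gt 0 a with ha | ha <;> nlinarith

theorem intervalIntegrable_div_add_mul {a b : ℝ} (hb : 0 < b) (hab : 0 < b + a) :
    IntervalIntegrable (fun t => a / (b + t * a)) MeasureTheory.volume 0 1 := by
  refine ContinuousOn.intervalIntegrable (continuousOn_const.div (by fun_prop) fun t ht => ?_)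
  rw [Set.uIcc_of_le zero_le_one] at ht
  exact (add_mul_pos_of_mem_Icc hb hab ht).ne'

theorem integral_div_add_mul {a b : ℝ} (hb : 0 < b) (hab : 0 < b + a) :
    ∫ t in (0 : ℝ)..1, a / (b + t * a) = Real.log (b + a) - Real.log b := by
  have hderiv : ∀ t ∈ Set.uIcc (0 : ℝ) 1,
      HasDerivAt (fun t => Real.log (b + t * a)) (a / (b + t * a)) t := by
    intro t ht
    rw [Set.uIcc_of_le zero_le_one] at ht
    simpa using (((hasDerivAt_id t).mul_const a).const_add b).log
      (add_mul_pos_of_mem_Icc hb hab ht).ne'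
  rw [intervalIntegral.integral_eq_sub_of_hasDerivAt hderiv
    (intervalIntegrable_div_add_mul hb hab)]
  simp

namespace Matrix

variable {n : Type*} [DecidableEq n]

section

variable [Fintype n] {R : Type*} [CommRing R] {A B : Matrix n n R}

theorem commute_nonsing_inv_right (h : Commute A B) : Commute A B⁻¹ := by
  by_cases hB : IsUnit B.det
  · calc A * B⁻¹ = B⁻¹ * (B * A) * B⁻¹ := by
          rw [← Matrix.mul_assoc, nonsing_inv_mul _ hB, Matrix.one_mul]
      _ = B⁻¹ * A := by
          rw [← h.eq, Matrix.mul_assoc, Matrix.mul_assoc, mul_nonsing_inv _ hB, Matrix.mul_one]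
  · rw [nonsing_inv_apply_not_isUnit _ hB]
    exact Commute.zero_right A

theorem IsSymm.mul_nonsing_inv (hA : A.IsSymm) (hB : B.IsSymm) (h : Commute A B) :
    (A * B⁻¹).IsSymm := by
  rw [IsSymm, transpose_mul, transpose_nonsing_inv, hA.eq, hB.eq]
  exact (commute_nonsing_inv_right h).eq.symm

theorem smul_mul_nonsing_inv_mul_smul_add_smul_mul (h : Commute A B) (hB : IsUnit B.det)
    (c t : R) :
    c • (A * B⁻¹) * (t • B) + (t • B) * (c • (A * B⁻¹)) = (2 * c * t) • A := by
  calc c • (A * B⁻¹) * (t • B) + (t • B) * (c • (A * B⁻¹))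
      = (c * t) • (A * B⁻¹ * B) + (c * t) • (B * A * B⁻¹) := by
        simp only [Matrix.mul_smul, Matrix.smul_mul, smul_smul, Matrix.mul_assoc, mul_comm t c]
    _ = (c * t) • A + (c * t) • A := by
        rw [nonsing_inv_mul_cancel_right B A hB, ← h.eq, mul_nonsing_inv_cancel_right B A hB]
    _ = (2 * c * t) • A := by module

theorem smul_mul_nonsing_inv_mul_smul_mul_smul_mul_nonsing_inv {δ t : R} (hB : IsUnit B.det)
    (hAB : t • A = B - δ • 1) (c : R) :
    c • (A * B⁻¹) * (t • B) * (c • (A * B⁻¹)) = (c * c) • (A - δ • (A * B⁻¹)) := by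
  calc c • (A * B⁻¹) * (t • B) * (c • (A * B⁻¹))
      = (c * c) • (A * (t • A) * B⁻¹) := by
        simp only [Matrix.mul_smul, Matrix.smul_mul, smul_smul,
          nonsing_inv_mul_cancel_right B A hB, Matrix.mul_assoc]
        ring_nf
    _ = (c * c) • (A - δ • (A * B⁻¹)) := by
        rw [hAB, Matrix.mul_sub, Matrix.sub_mul, mul_nonsing_inv_cancel_right B A hB,
          Matrix.mul_smul, Matrix.mul_one, Matrix.smul_mul]

end

section

variable [Fintype n] {𝕜 : Type*} [RCLike 𝕜] {A : Matrix n n 𝕜}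

theorem continuousOn_spectrum_real (A : Matrix n n 𝕜) (f : ℝ → ℝ) :
    ContinuousOn f (spectrum ℝ A) := by
  rw [continuousOn_iff_continuous_domRestrict]
  fun_prop

theorem IsHermitian.trace_cfc (hA : A.IsHermitian) (f : ℝ → ℝ) :
    (cfc f A).trace = ∑ i, (f (hA.eigenvalues i) : 𝕜) := by
  rw [hA.cfc_eq, IsHermitian.cfc, Unitary.conjStarAlgAut_apply, trace_mul_cycle,
    Unitary.coe_star_mul_self, one_mul, trace_diagonal]
  rfl

theorem IsHermitian.cfc_mul_add_const (hA : A.IsHermitian) (a b : ℝ) :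
    cfc (fun x => a * x + b) A = a • A + b • 1 := by
  rw [cfc_add_const (p := IsSelfAdjoint) b (fun x => a * x) A (continuousOn_spectrum_real A _) hA,
    cfc_const_mul_id (p := IsSelfAdjoint) a A hA, Algebra.algebraMap_eq_smul_one]

theorem IsHermitian.inv_cfc (hA : A.IsHermitian) {g : ℝ → ℝ}
    (hg : ∀ i, g (hA.eigenvalues i) ≠ 0) :
    (cfc g A)⁻¹ = cfc (fun x => (g x)⁻¹) A := by
  rw [nonsing_inv_eq_ringInverse,
    ← cfc_inv (p := IsSelfAdjoint) g A _ (continuousOn_spectrum_real A _) hA]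
  rw [hA.spectrum_real_eq_range_eigenvalues]
  rintro - ⟨i, rfl⟩
  exact hg i

theorem IsHermitian.trace_cfc_mul_inv_cfc (hA : A.IsHermitian) (f : ℝ → ℝ) {g : ℝ → ℝ}
    (hg : ∀ i, g (hA.eigenvalues i) ≠ 0) :
    (cfc f A * (cfc g A)⁻¹).trace =
      ∑ i, (f (hA.eigenvalues i) / g (hA.eigenvalues i) : 𝕜) := by
  rw [hA.inv_cfc hg, ← cfc_mul (p := IsSelfAdjoint) f _ A (continuousOn_spectrum_real A _)
    (continuousOn_spectrum_real A _), hA.trace_cfc]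
  simp [div_eq_mul_inv]

end

variable {M : Matrix n n ℝ} {δ t : ℝ}

theorem PosDef.smul_one_add_smul_sub (hM : M.PosDef) (hδ : 0 < δ) (ht : t ∈ Set.Icc (0 : ℝ) 1) :
    (δ • 1 + t • (M - δ • 1)).PosDef := by
  rcases ht.1.eq_or_lt with rfl | ht₀
  · simpa using PosDef.one.smul hδ
  rw [show δ • 1 + t • (M - δ • 1) = ((1 - t) * δ) • 1 + t • M by module]
  exact PosDef.posSemidef_add (PosDef.one.posSemidef.smul (mul_nonneg (sub_nonneg.2 ht.2) hδ.le))
    (hM.smul ht₀)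

variable [Fintype n]

theorem IsHermitian.trace_sub_mul_inv_smul_one_add_smul_sub (hM : M.IsHermitian)
    (hne : ∀ i, δ + t * (hM.eigenvalues i - δ) ≠ 0) :
    ((M - δ • 1) * (δ • 1 + t • (M - δ • 1))⁻¹).trace =
      ∑ i, (hM.eigenvalues i - δ) / (δ + t * (hM.eigenvalues i - δ)) := by
  have hnum : M - δ • 1 = cfc (fun x => 1 * x + -δ) M := by
    rw [hM.cfc_mul_add_const]; module
  have hden : δ • 1 + t • (M - δ • 1) = cfc (fun x => t * x + (1 - t) * δ) M := by
    rw [hM.cfc_mul_add_const]; module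
  have hne' : ∀ i, t * hM.eigenvalues i + (1 - t) * δ ≠ 0 := fun i => by
    convert hne i using 1; ring
  rw [hden, hnum, hM.trace_cfc_mul_inv_cfc _ hne']
  refine Finset.sum_congr rfl fun i _ => ?_
  simp only [RCLike.ofReal_real_eq_id, id_eq]
  ring_nf

theorem PosDef.trace_sub_mul_inv_smul_one_add_smul_sub (hM : M.PosDef) (hδ : 0 < δ)
    (ht : t ∈ Set.Icc (0 : ℝ) 1) :
    ((M - δ • 1) * (δ • 1 + t • (M - δ • 1))⁻¹).trace =
      ∑ i, (hM.1.eigenvalues i - δ) / (δ + t * (hM.1.eigenvalues i - δ)) :=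
  hM.1.trace_sub_mul_inv_smul_one_add_smul_sub fun i =>
    (add_mul_pos_of_mem_Icc hδ (by rw [add_sub_cancel]; exact hM.eigenvalues_pos i) ht).ne'

theorem PosDef.intervalIntegrable_trace_sub_mul_inv (hM : M.PosDef) (hδ : 0 < δ) :
    IntervalIntegrable (fun t => ((M - δ • 1) * (δ • 1 + t • (M - δ • 1))⁻¹).trace)
      MeasureTheory.volume 0 1 := by
  refine (IntervalIntegrable.sum Finset.univ fun i _ =>
    intervalIntegrable_div_add_mul (a := hM.1.eigenvalues i - δ) hδ
      (by rw [add_sub_cancel]; exact hM.eigenvalues_pos i)).congr_uIoo fun t ht => ?_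
  rw [Set.uIoo_of_le zero_le_one] at ht
  rw [hM.trace_sub_mul_inv_smul_one_add_smul_sub hδ (Set.Ioo_subset_Icc_self ht),
    Finset.sum_apply]

theorem PosDef.integral_trace_sub_mul_inv (hM : M.PosDef) (hδ : 0 < δ) :
    ∫ t in (0 : ℝ)..1, ((M - δ • 1) * (δ • 1 + t • (M - δ • 1))⁻¹).trace =
      Real.log M.det - Fintype.card n * Real.log δ := by
  have hpos (i : n) : 0 < δ + (hM.1.eigenvalues i - δ) := by
    rw [add_sub_cancel]; exact hM.eigenvalues_pos i
  rw [intervalIntegral.integral_congr fun t ht =>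
      hM.trace_sub_mul_inv_smul_one_add_smul_sub hδ (Set.uIcc_of_le (zero_le_one' ℝ) ▸ ht),
    intervalIntegral.integral_finsetSum fun i _ => intervalIntegrable_div_add_mul hδ (hpos i),
    Finset.sum_congr rfl fun i _ => integral_div_add_mul hδ (hpos i), Finset.sum_sub_distrib,
    hM.1.det_eq_prod_eigenvalues]
  simp only [RCLike.ofReal_real_eq_id, id_eq, add_sub_cancel]
  rw [Real.log_prod fun i _ => (hM.eigenvalues_pos i).ne']
  simp

end Matrix

theorem stmt_12_general (m : ℕ) (δ : ℝ) (hδ : 0 < δ)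
    (M : Matrix (Fin m) (Fin m) ℝ) (hM : M.PosDef)
    (φ φ' k : ℝ → Matrix (Fin m) (Fin m) ℝ)
    (hφ : ∀ t : ℝ, φ t = (δ * t) • (1 : Matrix (Fin m) (Fin m) ℝ)
        + (t ^ 2) • (M - δ • (1 : Matrix (Fin m) (Fin m) ℝ)))
    (hφ' : ∀ t : ℝ, φ' t = δ • (1 : Matrix (Fin m) (Fin m) ℝ)
        + (2 * t) • (M - δ • (1 : Matrix (Fin m) (Fin m) ℝ)))
    (hk : ∀ t : ℝ, k t = (2:ℝ) • ((M - δ • (1 : Matrix (Fin m) (Fin m) ℝ))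
        * (δ • (1 : Matrix (Fin m) (Fin m) ℝ)
            + t • (M - δ • (1 : Matrix (Fin m) (Fin m) ℝ)))⁻¹)) :
    (∀ t ∈ Set.Ioc (0:ℝ) 1,
      (δ • (1 : Matrix (Fin m) (Fin m) ℝ)
          + t • (M - δ • (1 : Matrix (Fin m) (Fin m) ℝ))).PosDef ∧
      IsUnit (δ • (1 : Matrix (Fin m) (Fin m) ℝ)
          + t • (M - δ • (1 : Matrix (Fin m) (Fin m) ℝ))) ∧
      (φ t).PosDef) ∧
    (∀ t ∈ Set.Ioc (0:ℝ) 1,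
      (k t).IsSymm ∧
      k t * φ t + φ t * k t
        = (2:ℝ) • (φ' t - δ • (1 : Matrix (Fin m) (Fin m) ℝ))) ∧
    (1 / 8 : ℝ) * (∫ t in (0:ℝ)..1, (k t * φ t * k t).trace)
      = (1 / 2) * M.trace - (δ / 2) * Real.log M.det - m * δ / 2
          + (m * δ / 2) * Real.log δ := by
  set A := M - δ • (1 : Matrix (Fin m) (Fin m) ℝ) with hA
  have hB : ∀ t ∈ Set.Icc (0 : ℝ) 1, (δ • 1 + t • A).PosDef := fun t ht =>
    hM.smul_one_add_smul_sub hδ ht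
  have hBdet : ∀ t ∈ Set.Icc (0 : ℝ) 1, IsUnit (δ • 1 + t • A).det := fun t ht =>
    (hB t ht).det_pos.ne'.isUnit
  have hcomm : ∀ t : ℝ, Commute A (δ • 1 + t • A) := fun t =>
    ((Commute.one_right A).smul_right δ).add_right ((Commute.refl A).smul_right t)
  have hφB : ∀ t, φ t = t • (δ • 1 + t • A) := fun t => by rw [hφ]; module
  refine ⟨fun t ht => ?_, fun t ht => ⟨?_, ?_⟩, ?_⟩
  · have hBt := hB t (Set.Ioc_subset_Icc_self ht)
    exact ⟨hBt, hBt.isUnit, hφB t ▸ hBt.smul ht.1⟩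
  · have hAsymm : A.IsSymm := (isHermitian_iff_isSymm.1 hM.1).sub (isSymm_one.smul δ)
    rw [hk]
    exact (hAsymm.mul_nonsing_inv ((isSymm_one.smul δ).add (hAsymm.smul t)) (hcomm t)).smul 2
  · rw [hk, hφB, hφ', smul_mul_nonsing_inv_mul_smul_add_smul_mul (hcomm t)
      (hBdet t (Set.Ioc_subset_Icc_self ht))]
    module
  · have hkφk : ∀ t ∈ Set.uIcc (0 : ℝ) 1, (k t * φ t * k t).trace =
        4 * A.trace - 4 * δ * (A * (δ • 1 + t • A)⁻¹).trace := fun t ht => by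
      rw [hk, hφB, smul_mul_nonsing_inv_mul_smul_mul_smul_mul_nonsing_inv (δ := δ)
        (hBdet t (Set.uIcc_of_le (zero_le_one' ℝ) ▸ ht)) (by module)]
      simp only [trace_smul, trace_sub, smul_eq_mul]
      ring
    rw [intervalIntegral.integral_congr hkφk, intervalIntegral.integral_sub
      intervalIntegrable_const ((hM.intervalIntegrable_trace_sub_mul_inv hδ).const_mul _),
      intervalIntegral.integral_const_mul (4 * δ), intervalIntegral.integral_const, hA,
      hM.integral_trace_sub_mul_inv hδ]
    simp [trace_sub]
    ring

theorem stmt_12 (m : ℕ) (hm : 1 ≤ m) (δ : ℝ) (hδ : 0 < δ)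
    (M : Matrix (Fin m) (Fin m) ℝ) (hM : M.PosDef)
    (φ φ' k : ℝ → Matrix (Fin m) (Fin m) ℝ)
    (hφ : ∀ t : ℝ, φ t = (δ * t) • (1 : Matrix (Fin m) (Fin m) ℝ)
        + (t ^ 2) • (M - δ • (1 : Matrix (Fin m) (Fin m) ℝ)))
    (hφ' : ∀ t : ℝ, φ' t = δ • (1 : Matrix (Fin m) (Fin m) ℝ)
        + (2 * t) • (M - δ • (1 : Matrix (Fin m) (Fin m) ℝ)))
    (hk : ∀ t : ℝ, k t = (2:ℝ) • ((M - δ • (1 : Matrix (Fin m) (Fin m) ℝ))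
        * (δ • (1 : Matrix (Fin m) (Fin m) ℝ)
            + t • (M - δ • (1 : Matrix (Fin m) (Fin m) ℝ)))⁻¹)) :
    (∀ t ∈ Set.Ioc (0:ℝ) 1,
      (δ • (1 : Matrix (Fin m) (Fin m) ℝ)
          + t • (M - δ • (1 : Matrix (Fin m) (Fin m) ℝ))).PosDef ∧
      IsUnit (δ • (1 : Matrix (Fin m) (Fin m) ℝ)
          + t • (M - δ • (1 : Matrix (Fin m) (Fin m) ℝ))) ∧
      (φ t).PosDef) ∧
    (∀ t ∈ Set.Ioc (0:ℝ) 1,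
      (k t).IsSymm ∧
      k t * φ t + φ t * k t
        = (2:ℝ) • (φ' t - δ • (1 : Matrix (Fin m) (Fin m) ℝ))) ∧
    (1 / 8 : ℝ) * (∫ t in (0:ℝ)..1, (k t * φ t * k t).trace)
      = (1 / 2) * M.trace - (δ / 2) * Real.log M.det - m * δ / 2
          + (m * δ / 2) * Real.log δ :=
  stmt_12_general m δ hδ M hM φ φ' k hφ hφ' hk
end

section
/- Let m ≥ 1, δ > 0, a > 0, and define f(x) = x/2 − (δ/2)·log x − δ/2 + (δ/2)·log δ for x > 0. Then the value K_max(a), defined as f(a) if a > δ and as m·f(a) if a ≤ δ, is the least element of the set { Σᵢ₌₁ᵐ f(λᵢ) : λ ∈ ℝᵐ with 0 < λᵢ ≤ a for all i and λᵢ = a for some i }. -/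
private lemma log_aux {c x : ℝ} (hc : 0 < c) (hx : 0 < x) :
    c * (Real.log x - Real.log c) ≤ x - c := by
  have h := Real.log_le_sub_one_of_pos (show 0 < x / c by positivity)
  rw [Real.log_div (ne_of_gt hx) (ne_of_gt hc)] at h
  have := mul_le_mul_of_nonneg_left h hc.le
  calc c * (Real.log x - Real.log c) ≤ c * (x / c - 1) := this
    _ = x - c := by field_simp

theorem stmt_14 (m : ℕ) (hm : 1 ≤ m) (δ : ℝ) (hδ : 0 < δ) (a : ℝ) (ha : 0 < a)
    (f : ℝ → ℝ)
    (hf : ∀ x : ℝ, f x = x / 2 - (δ / 2) * Real.log x - δ / 2 + (δ / 2) * Real.log δ) :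
    IsLeast
      { y : ℝ | ∃ lam : Fin m → ℝ, (∀ i, 0 < lam i ∧ lam i ≤ a) ∧ (∃ i, lam i = a) ∧
          y = ∑ i : Fin m, f (lam i) }
      (if δ < a then f a else (m : ℝ) * f a) := by
  have hfδ : f δ = 0 := by rw [hf]; ring
  have hnn : ∀ x : ℝ, 0 < x → 0 ≤ f x := by
    intro x hx
    have := log_aux hδ hx
    rw [hf]; nlinarith
  have hmono : a ≤ δ → ∀ x : ℝ, 0 < x → x ≤ a → f a ≤ f x := by
    intro haδ x hx hxa
    have h := Real.log_le_sub_one_of_pos (show 0 < x / a by positivity)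
    rw [Real.log_div (ne_of_gt hx) (ne_of_gt ha)] at h
    -- δ * (log x - log a) ≤ δ * (x/a - 1) = δ*(x-a)/a ≤ x - a
    have h1 : δ * (Real.log x - Real.log a) ≤ δ * (x / a - 1) :=
      mul_le_mul_of_nonneg_left h hδ.le
    have h2 : δ * (x / a - 1) ≤ x - a := by
      rw [div_sub_one (ne_of_gt ha), mul_comm, div_mul_eq_mul_div, div_le_iff₀ ha]
      nlinarith [sub_nonpos.mpr hxa, sub_nonneg.mpr haδ]
    rw [hf, hf]
    nlinarith
  constructor
  · -- membership
    by_cases hda : δ < a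
    · rw [if_pos hda]
      set i0 : Fin m := ⟨0, hm⟩
      refine ⟨fun i => if i = i0 then a else δ, ?_, ⟨i0, by simp⟩, ?_⟩
      · intro i
        by_cases h : i = i0 <;> simp [h, ha, hδ, le_of_lt hda]
      · have : ∀ i : Fin m, f (if i = i0 then a else δ) = if i = i0 then f a else 0 := by
          intro i; by_cases h : i = i0 <;> simp [h, hfδ]
        rw [Finset.sum_congr rfl (fun i _ => this i), Finset.sum_ite_eq' Finset.univ i0]
        simp
    · rw [if_neg hda]
      refine ⟨fun _ => a, fun i => ⟨ha, le_refl a⟩, ⟨⟨0, hm⟩, rfl⟩, ?_⟩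
      simp [Finset.sum_const, mul_comm]
  · -- lower bound
    rintro y ⟨lam, hlam, ⟨i0, hi0⟩, rfl⟩
    by_cases hda : δ < a
    · rw [if_pos hda]
      calc f a = f (lam i0) := by rw [hi0]
        _ ≤ ∑ i : Fin m, f (lam i) :=
          Finset.single_le_sum (fun i _ => hnn _ (hlam i).1) (Finset.mem_univ i0)
    · rw [if_neg hda]
      push_neg at hda
      calc (m : ℝ) * f a = ∑ _i : Fin m, f a := by simp [mul_comm]
        _ ≤ ∑ i : Fin m, f (lam i) :=
          Finset.sum_le_sum fun i _ => hmono hda _ (hlam i).1 (hlam i).2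
end

section
/- Let m ≥ 1, δ > 0. Let k : [0,1] → m×m real symmetric matrices be measurable and square-integrable, and let (kₙ) be a sequence of measurable square-integrable functions [0,1] → m×m real symmetric matrices with ∫₀¹ ‖kₙ(s) − k(s)‖² ds → 0. Let φ and φₙ be continuous matrix-valued functions on [0,1] satisfying φ(t) = δt·I + ∫₀ᵗ (k(s)·φ(s) + φ(s)·k(s)) ds and φₙ(t) = δt·I + ∫₀ᵗ (kₙ(s)·φₙ(s) + φₙ(s)·kₙ(s)) ds for all t. Then sup_{n} sup_{t∈[0,1]} ‖φₙ(t)‖ < ∞, and sup_{t∈[0,1]} ‖φₙ(t) − φ(t)‖ → 0 as n → ∞. -/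
open MeasureTheory Filter Set intervalIntegral
open scoped Topology Matrix.Norms.L2Operator

/-!
If `ψ t = g t + ∫₀ᵗ (K ψ + ψ K)` with `‖g‖ ≤ a`, then `u = ‖ψ‖` satisfies
`u t ≤ a + ∫₀ᵗ 2‖K‖ u`. On a stretch where `∫ 2‖K‖ ≤ 1/2` this forces `u ≤ 2a` (compare `u` with
its maximum), so cutting `[0, 1]` into such stretches gives `u ≤ 2^(N+1) a` as soon as
`∫₀¹ 2‖K‖ ≤ N/2`. On a probability space `L²`-convergence implies `L¹`-convergence, so
`∫₀¹ ‖kₙ‖ ≤ ∫₀¹ ‖k‖ + ∫₀¹ ‖kₙ - k‖` is bounded and one `N` serves every `n`.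
Applied to `φₙ` with `a = |δ| ‖1‖` this is the uniform bound. The difference `φₙ - φ` solves
the same equation with `K = kₙ` and forcing `∫₀ᵗ ((kₙ - k) φ + φ (kₙ - k))`, of norm at most
`2 (sup ‖φ‖) ∫₀¹ ‖kₙ - k‖ → 0`, which gives uniform convergence.
-/

lemma MeasureTheory.IntegrableOn.intervalIntegrable_of_subset {E : Type*} [NormedAddCommGroup E]
    {f : ℝ → E} {c d x y : ℝ} (hf : IntegrableOn f (Icc c d)) (hcx : c ≤ x) (hxy : x ≤ y)
    (hyd : y ≤ d) : IntervalIntegrable f volume x y :=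
  (hf.mono_set (by rw [uIcc_of_le hxy]; exact Icc_subset_Icc hcx hyd)).intervalIntegrable

section Gronwall

variable {b u : ℝ → ℝ} {a c d : ℝ}

lemma integral_mul_le_mul_integral {t' A : ℝ} (hb : IntegrableOn b (Icc c d))
    (hb0 : ∀ s ∈ Icc c d, 0 ≤ b s) (hu : ContinuousOn u (Icc c d)) (ht' : t' ∈ Icc c d)
    (hA : ∀ s ∈ Icc c t', u s ≤ A) :
    ∫ x in c..t', b x * u x ≤ A * ∫ x in c..t', b x := by
  rw [← intervalIntegral.integral_const_mul]
  refine integral_mono_on ht'.1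
    ((hb.mul_continuousOn hu isCompact_Icc).intervalIntegrable_of_subset le_rfl ht'.1 ht'.2)
    ((hb.intervalIntegrable_of_subset le_rfl ht'.1 ht'.2).const_mul _) fun s hs => ?_
  rw [mul_comm A]
  exact mul_le_mul_of_nonneg_left (hA s hs) (hb0 s ⟨hs.1, hs.2.trans ht'.2⟩)

lemma le_two_mul_of_le_add_integral (hb : IntegrableOn b (Icc c d))
    (hb0 : ∀ s ∈ Icc c d, 0 ≤ b s) (hu : ContinuousOn u (Icc c d))
    (hu0 : ∀ s ∈ Icc c d, 0 ≤ u s) (hhalf : ∫ s in c..d, b s ≤ 1 / 2)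
    (hle : ∀ s ∈ Icc c d, u s ≤ a + ∫ x in c..s, b x * u x) {t : ℝ} (ht : t ∈ Icc c d) :
    u t ≤ 2 * a := by
  obtain ⟨t₀, ht₀, hmax⟩ := isCompact_Icc.exists_isMaxOn ⟨t, ht⟩ hu
  have hb_t₀ : ∫ s in c..t₀, b s ≤ 1 / 2 :=
    (integral_mono_interval le_rfl ht₀.1 ht₀.2
      (ae_restrict_of_forall_mem measurableSet_Ioc fun s hs => hb0 s (Ioc_subset_Icc_self hs))
      (hb.intervalIntegrable_of_subset le_rfl (ht.1.trans ht.2) le_rfl)).trans hhalf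
  have hbu_t₀ := integral_mul_le_mul_integral hb hb0 hu ht₀ fun s hs =>
    hmax (⟨hs.1, hs.2.trans ht₀.2⟩ : s ∈ Icc c d)
  have hut : u t ≤ u t₀ := hmax ht
  nlinarith [hle t₀ ht₀, mul_le_mul_of_nonneg_left hb_t₀ (hu0 t₀ ht₀)]

lemma le_add_integral_of_le_on_Icc {t' A : ℝ} (hb : IntegrableOn b (Icc c d))
    (hb0 : ∀ s ∈ Icc c d, 0 ≤ b s) (hu : ContinuousOn u (Icc c d)) (ht' : t' ∈ Icc c d)
    (hA : ∀ s ∈ Icc c t', u s ≤ A)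
    (hle : ∀ s ∈ Icc c d, u s ≤ a + ∫ x in c..s, b x * u x) {t : ℝ} (ht : t ∈ Icc t' d) :
    u t ≤ a + A * (∫ x in c..t', b x) + ∫ x in t'..t, b x * u x := by
  have hbu := hb.mul_continuousOn hu isCompact_Icc
  have hsplit := integral_add_adjacent_intervals
    (hbu.intervalIntegrable_of_subset le_rfl ht'.1 ht'.2)
    (hbu.intervalIntegrable_of_subset ht'.1 ht.1 ht.2)
  have hleft := integral_mul_le_mul_integral hb hb0 hu ht' hA
  have := hle t ⟨ht'.1.trans ht.1, ht.2⟩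
  linarith

lemma le_two_pow_mul_of_le_add_integral (ha : 0 ≤ a) (hb : IntegrableOn b (Icc c d))
    (hb0 : ∀ s ∈ Icc c d, 0 ≤ b s) (hu : ContinuousOn u (Icc c d))
    (hu0 : ∀ s ∈ Icc c d, 0 ≤ u s) (n : ℕ) (hn : ∫ s in c..d, b s ≤ n / 2)
    (hle : ∀ s ∈ Icc c d, u s ≤ a + ∫ x in c..s, b x * u x) {t : ℝ} (ht : t ∈ Icc c d) :
    u t ≤ 2 ^ (n + 1) * a := by
  induction n generalizing c a with
  | zero =>
    simpa using
      le_two_mul_of_le_add_integral hb hb0 hu hu0 (hn.trans (by norm_num)) hle ht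
  | succ n ih =>
    have h2a : 2 * a ≤ 2 ^ (n + 2) * a := by
      gcongr
      calc (2 : ℝ) = 2 ^ 1 := (pow_one 2).symm
        _ ≤ 2 ^ (n + 2) := pow_le_pow_right₀ one_le_two (by omega)
    by_cases hhalf : ∫ s in c..d, b s ≤ 1 / 2
    · exact (le_two_mul_of_le_add_integral hb hb0 hu hu0 hhalf hle ht).trans h2a
    have hcd : c ≤ d := ht.1.trans ht.2
    obtain ⟨t', ht', hbt'⟩ : ∃ t' ∈ Icc c d, ∫ s in c..t', b s = 1 / 2 := by
      have hcont := continuousOn_primitive_interval (hb.mono_set (uIcc_of_le hcd).subset)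
      rw [uIcc_of_le hcd] at hcont
      exact intermediate_value_Icc hcd hcont ⟨by norm_num, (not_le.1 hhalf).le⟩
    have hsub : Icc c t' ⊆ Icc c d := Icc_subset_Icc le_rfl ht'.2
    have hsub' : Icc t' d ⊆ Icc c d := Icc_subset_Icc ht'.1 le_rfl
    have hleft : ∀ s ∈ Icc c t', u s ≤ 2 * a := fun s hs =>
      le_two_mul_of_le_add_integral (hb.mono_set hsub) (fun x hx => hb0 x (hsub hx))
        (hu.mono hsub) (fun x hx => hu0 x (hsub hx)) hbt'.le (fun x hx => hle x (hsub hx)) hs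
    rcases le_total t t' with htt' | htt'
    · exact (hleft t ⟨ht.1, htt'⟩).trans h2a
    have hn' : ∫ s in t'..d, b s ≤ n / 2 := by
      rw [← integral_interval_sub_left (hb.intervalIntegrable_of_subset le_rfl hcd le_rfl)
        (hb.intervalIntegrable_of_subset le_rfl ht'.1 ht'.2), hbt']
      push_cast at hn
      linarith
    have hle' : ∀ s ∈ Icc t' d, u s ≤ 2 * a + ∫ x in t'..s, b x * u x := fun s hs => by
      have := le_add_integral_of_le_on_Icc hb hb0 hu ht' hleft hle hs
      rw [hbt'] at this
      linarith
    calc u t ≤ 2 ^ (n + 1) * (2 * a) :=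
          ih (by positivity) (hb.mono_set hsub') (fun x hx => hb0 x (hsub' hx)) (hu.mono hsub')
            (fun x hx => hu0 x (hsub' hx)) hn' hle' ⟨htt', ht.2⟩
      _ = 2 ^ (n + 2) * a := by ring

end Gronwall

section Lp

variable {Ω E : Type*} [MeasurableSpace Ω] {μ : Measure Ω} [IsProbabilityMeasure μ]
  [NormedAddCommGroup E]

lemma sq_integral_norm_le_integral_sq_norm {f : Ω → E} (hf : MemLp f 2 μ) :
    (∫ ω, ‖f ω‖ ∂μ) ^ 2 ≤ ∫ ω, ‖f ω‖ ^ 2 ∂μ := by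
  have hvar := ProbabilityTheory.variance_eq_sub hf.norm
  have hnonneg := ProbabilityTheory.variance_nonneg (fun ω => ‖f ω‖) μ
  simp only [Pi.pow_apply] at hvar
  linarith

lemma tendsto_integral_norm_of_tendsto_integral_sq_norm {ι : Type*} {l : Filter ι}
    {f : ι → Ω → E} (hf : ∀ i, MemLp (f i) 2 μ)
    (h : Tendsto (fun i => ∫ ω, ‖f i ω‖ ^ 2 ∂μ) l (𝓝 0)) :
    Tendsto (fun i => ∫ ω, ‖f i ω‖ ∂μ) l (𝓝 0) := by
  have hsqrt : Tendsto (fun i => √(∫ ω, ‖f i ω‖ ^ 2 ∂μ)) l (𝓝 0) :=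
    (Real.continuous_sqrt.tendsto' 0 0 Real.sqrt_zero).comp h
  exact squeeze_zero (fun i => integral_nonneg fun ω => norm_nonneg _)
    (fun i => (le_abs_self _).trans
      (Real.abs_le_sqrt (sq_integral_norm_le_integral_sq_norm (hf i)))) hsqrt

end Lp

lemma Matrix.aestronglyMeasurable_of_measurable_apply {α m n : Type*} [MeasurableSpace α]
    {μ : Measure α} [Fintype m] [Fintype n] {f : α → Matrix m n ℝ}
    (hf : ∀ i j, Measurable fun x => f x i j) : AEStronglyMeasurable f μ := by
  -- `Matrix` has no `MeasurableSpace` instance; the product σ-algebra is Borel for its topology.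
  let _ : MeasurableSpace (Matrix m n ℝ) := MeasurableSpace.pi
  have _ : BorelSpace (Matrix m n ℝ) := Pi.borelSpace
  exact (measurable_pi_lambda _ fun i => measurable_pi_lambda _ fun j => hf i j)
    |>.aestronglyMeasurable

section LinearEquation

variable {E : Type*} [NormedRing E] {K ψ g : ℝ → E} {a c d : ℝ}

lemma norm_mul_add_mul_le (k x : E) : ‖k * x + x * k‖ ≤ 2 * ‖k‖ * ‖x‖ :=
  calc ‖k * x + x * k‖ ≤ ‖k‖ * ‖x‖ + ‖x‖ * ‖k‖ :=
        (norm_add_le _ _).trans (add_le_add (norm_mul_le _ _) (norm_mul_le _ _))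
    _ = 2 * ‖k‖ * ‖x‖ := by ring

lemma MeasureTheory.IntegrableOn.mul_add_mul_continuousOn (hK : IntegrableOn K (Icc c d))
    (hψ : ContinuousOn ψ (Icc c d)) :
    IntegrableOn (fun s => K s * ψ s + ψ s * K s) (Icc c d) :=
  (hK.mul_continuousOn hψ isCompact_Icc).add (hK.continuousOn_mul hψ isCompact_Icc)

lemma exists_nat_integral_norm_le {ι : Type*} {K₀ : ℝ → E} {K : ι → ℝ → E} (hcd : c ≤ d)
    (hK₀ : IntegrableOn K₀ (Icc c d)) (hK : ∀ i, IntegrableOn (K i) (Icc c d))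
    (hbdd : BddAbove (range fun i => ∫ s in Icc c d, ‖K i s - K₀ s‖)) :
    ∃ N : ℕ, ∀ i, ∫ s in c..d, 2 * ‖K i s‖ ≤ N / 2 := by
  obtain ⟨B, hB⟩ := hbdd
  refine ⟨⌈4 * ((∫ s in Icc c d, ‖K₀ s‖) + B)⌉₊, fun i => ?_⟩
  have hdiff : IntegrableOn (fun s => ‖K i s - K₀ s‖) (Icc c d) := ((hK i).sub hK₀).norm
  have hle : ∫ s in Icc c d, ‖K i s‖ ≤ (∫ s in Icc c d, ‖K₀ s‖) + B :=
    calc ∫ s in Icc c d, ‖K i s‖ ≤ ∫ s in Icc c d, (‖K₀ s‖ + ‖K i s - K₀ s‖) :=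
          integral_mono (hK i).norm (hK₀.norm.add hdiff) fun s => norm_le_norm_add_norm_sub' _ _
      _ = (∫ s in Icc c d, ‖K₀ s‖) + ∫ s in Icc c d, ‖K i s - K₀ s‖ :=
          integral_add hK₀.norm hdiff
      _ ≤ (∫ s in Icc c d, ‖K₀ s‖) + B := add_le_add_right (hB (mem_range_self i)) _
  rw [intervalIntegral.integral_const_mul, integral_of_le hcd, ← integral_Icc_eq_integral_Ioc]
  linarith [Nat.le_ceil (4 * ((∫ s in Icc c d, ‖K₀ s‖) + B))]

variable [NormedSpace ℝ E]

lemma norm_le_add_integral_of_eq_add_integral (hK : IntegrableOn K (Icc c d))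
    (hψ : ContinuousOn ψ (Icc c d)) (hg : ∀ t ∈ Icc c d, ‖g t‖ ≤ a)
    (hψ_eq : ∀ t ∈ Icc c d, ψ t = g t + ∫ s in c..t, (K s * ψ s + ψ s * K s))
    {t : ℝ} (ht : t ∈ Icc c d) :
    ‖ψ t‖ ≤ a + ∫ s in c..t, 2 * ‖K s‖ * ‖ψ s‖ := by
  rw [hψ_eq t ht]
  refine (norm_add_le _ _).trans (add_le_add (hg t ht) ?_)
  refine (intervalIntegral.norm_integral_le_integral_norm ht.1).trans (integral_mono_on ht.1
    (IntegrableOn.intervalIntegrable_of_subset (hK.mul_add_mul_continuousOn hψ).norm le_rfl ht.1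
      ht.2)
    (IntegrableOn.intervalIntegrable_of_subset
      (IntegrableOn.mul_continuousOn (hK.norm.const_mul 2) hψ.norm isCompact_Icc) le_rfl ht.1 ht.2)
    fun s _ => norm_mul_add_mul_le _ _)

lemma norm_le_two_pow_mul_of_eq_add_integral (ha : 0 ≤ a) (hK : IntegrableOn K (Icc c d))
    (hψ : ContinuousOn ψ (Icc c d)) (hg : ∀ t ∈ Icc c d, ‖g t‖ ≤ a)
    (hψ_eq : ∀ t ∈ Icc c d, ψ t = g t + ∫ s in c..t, (K s * ψ s + ψ s * K s))
    (n : ℕ) (hn : ∫ s in c..d, 2 * ‖K s‖ ≤ n / 2) {t : ℝ} (ht : t ∈ Icc c d) :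
    ‖ψ t‖ ≤ 2 ^ (n + 1) * a :=
  le_two_pow_mul_of_le_add_integral (u := fun s => ‖ψ s‖) ha (hK.norm.const_mul 2)
    (fun _ _ => by positivity) hψ.norm (fun _ _ => norm_nonneg _) n hn
    (fun _ hs => norm_le_add_integral_of_eq_add_integral hK hψ hg hψ_eq hs) ht

lemma sub_eq_integral_add_integral {K₁ K₂ ψ₁ ψ₂ : ℝ → E} (hK₁ : IntegrableOn K₁ (Icc c d))
    (hK₂ : IntegrableOn K₂ (Icc c d)) (hψ₁ : ContinuousOn ψ₁ (Icc c d))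
    (hψ₂ : ContinuousOn ψ₂ (Icc c d))
    (h₁ : ∀ t ∈ Icc c d, ψ₁ t = g t + ∫ s in c..t, (K₁ s * ψ₁ s + ψ₁ s * K₁ s))
    (h₂ : ∀ t ∈ Icc c d, ψ₂ t = g t + ∫ s in c..t, (K₂ s * ψ₂ s + ψ₂ s * K₂ s))
    {t : ℝ} (ht : t ∈ Icc c d) :
    ψ₁ t - ψ₂ t = (∫ s in c..t, ((K₁ s - K₂ s) * ψ₂ s + ψ₂ s * (K₁ s - K₂ s)))
      + ∫ s in c..t, (K₁ s * (ψ₁ s - ψ₂ s) + (ψ₁ s - ψ₂ s) * K₁ s) := by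
  have hint {K ψ : ℝ → E} (hK : IntegrableOn K (Icc c d)) (hψ : ContinuousOn ψ (Icc c d)) :
      IntervalIntegrable (fun s => K s * ψ s + ψ s * K s) volume c t :=
    (hK.mul_add_mul_continuousOn hψ).intervalIntegrable_of_subset le_rfl ht.1 ht.2
  calc ψ₁ t - ψ₂ t
      = (∫ s in c..t, (K₁ s * ψ₁ s + ψ₁ s * K₁ s))
          - ∫ s in c..t, (K₂ s * ψ₂ s + ψ₂ s * K₂ s) := by
        rw [h₁ t ht, h₂ t ht, add_sub_add_left_eq_sub]
    _ = ∫ s in c..t, ((K₁ s * ψ₁ s + ψ₁ s * K₁ s) - (K₂ s * ψ₂ s + ψ₂ s * K₂ s)) :=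
        (integral_sub (hint hK₁ hψ₁) (hint hK₂ hψ₂)).symm
    _ = ∫ s in c..t, (((K₁ s - K₂ s) * ψ₂ s + ψ₂ s * (K₁ s - K₂ s))
          + (K₁ s * (ψ₁ s - ψ₂ s) + (ψ₁ s - ψ₂ s) * K₁ s)) :=
        integral_congr fun s _ => by noncomm_ring
    _ = _ := integral_add (hint (hK₁.sub hK₂) hψ₂) (hint hK₁ (hψ₁.sub hψ₂))

lemma norm_integral_mul_add_mul_le {M : ℝ} (hK : IntegrableOn K (Icc c d))
    (hψ : ContinuousOn ψ (Icc c d)) (hM : ∀ s ∈ Icc c d, ‖ψ s‖ ≤ M) {t : ℝ} (ht : t ∈ Icc c d) :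
    ‖∫ s in c..t, (K s * ψ s + ψ s * K s)‖ ≤ 2 * M * ∫ s in Icc c d, ‖K s‖ := by
  have hM0 : 0 ≤ M := (norm_nonneg _).trans (hM t ht)
  have hcd : c ≤ d := ht.1.trans ht.2
  have hKM : IntegrableOn (fun s => 2 * M * ‖K s‖) (Icc c d) := hK.norm.const_mul (2 * M)
  calc ‖∫ s in c..t, (K s * ψ s + ψ s * K s)‖
      ≤ ∫ s in c..t, ‖K s * ψ s + ψ s * K s‖ :=
        intervalIntegral.norm_integral_le_integral_norm ht.1
    _ ≤ ∫ s in c..t, 2 * M * ‖K s‖ := by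
      refine integral_mono_on ht.1
        (IntegrableOn.intervalIntegrable_of_subset (hK.mul_add_mul_continuousOn hψ).norm le_rfl
          ht.1 ht.2)
        (hKM.intervalIntegrable_of_subset le_rfl ht.1 ht.2) fun s hs => ?_
      have := hM s ⟨hs.1, hs.2.trans ht.2⟩
      nlinarith [norm_mul_add_mul_le (K s) (ψ s), norm_nonneg (K s)]
    _ ≤ ∫ s in c..d, 2 * M * ‖K s‖ :=
      integral_mono_interval le_rfl ht.1 ht.2 (ae_of_all _ fun _ => by positivity)
        (hKM.intervalIntegrable_of_subset le_rfl hcd le_rfl)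
    _ = 2 * M * ∫ s in Icc c d, ‖K s‖ := by
      rw [intervalIntegral.integral_const_mul, integral_of_le hcd, integral_Icc_eq_integral_Ioc]

end LinearEquation

theorem stmt_16_general (m : ℕ) (δ : ℝ)
    (k : ℝ → Matrix (Fin m) (Fin m) ℝ)
    (kn : ℕ → ℝ → Matrix (Fin m) (Fin m) ℝ)
    (hkmeas : ∀ i j, Measurable fun s => k s i j)
    (hknmeas : ∀ n, ∀ i j, Measurable fun s => kn n s i j)
    (hkL2 : IntegrableOn (fun s => ‖k s‖ ^ 2) (Set.Icc 0 1))
    (hknL2 : ∀ n, IntegrableOn (fun s => ‖kn n s‖ ^ 2) (Set.Icc 0 1))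
    (hconv : Tendsto (fun n => ∫ s in Set.Icc (0:ℝ) 1, ‖kn n s - k s‖ ^ 2) atTop (nhds 0))
    (φ : ℝ → Matrix (Fin m) (Fin m) ℝ)
    (φn : ℕ → ℝ → Matrix (Fin m) (Fin m) ℝ)
    (hφcont : ContinuousOn φ (Set.Icc 0 1))
    (hφncont : ∀ n, ContinuousOn (φn n) (Set.Icc 0 1))
    (hφ : ∀ t ∈ Set.Icc (0:ℝ) 1,
      φ t = (δ * t) • (1 : Matrix (Fin m) (Fin m) ℝ)
          + ∫ s in (0:ℝ)..t, (k s * φ s + φ s * k s))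
    (hφn : ∀ n, ∀ t ∈ Set.Icc (0:ℝ) 1,
      φn n t = (δ * t) • (1 : Matrix (Fin m) (Fin m) ℝ)
          + ∫ s in (0:ℝ)..t, (kn n s * φn n s + φn n s * kn n s)) :
    (∃ C : ℝ, ∀ n, ∀ t ∈ Set.Icc (0:ℝ) 1, ‖φn n t‖ ≤ C) ∧
    (∀ ε > (0:ℝ), ∃ N : ℕ, ∀ n ≥ N, ∀ t ∈ Set.Icc (0:ℝ) 1, ‖φn n t - φ t‖ < ε) := by
  have : IsProbabilityMeasure (volume.restrict (Icc (0:ℝ) 1)) := ⟨by simp⟩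
  have hk2 : MemLp k 2 (volume.restrict (Icc 0 1)) := (memLp_two_iff_integrable_sq_norm
    (Matrix.aestronglyMeasurable_of_measurable_apply hkmeas)).2 hkL2
  have hkn2 (n : ℕ) : MemLp (kn n) 2 (volume.restrict (Icc 0 1)) :=
    (memLp_two_iff_integrable_sq_norm
      (Matrix.aestronglyMeasurable_of_measurable_apply (hknmeas n))).2 (hknL2 n)
  have hk : IntegrableOn k (Icc 0 1) := hk2.integrable one_le_two
  have hkn (n : ℕ) : IntegrableOn (kn n) (Icc 0 1) := (hkn2 n).integrable one_le_two
  have hL1 : Tendsto (fun n => ∫ s in Icc (0:ℝ) 1, ‖kn n s - k s‖) atTop (𝓝 0) :=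
    tendsto_integral_norm_of_tendsto_integral_sq_norm (fun n => (hkn2 n).sub hk2) hconv
  obtain ⟨N, hN⟩ := exists_nat_integral_norm_le zero_le_one hk hkn hL1.bddAbove_range
  obtain ⟨M, hM⟩ := isCompact_Icc.exists_bound_of_continuousOn hφcont
  have hM0 : 0 ≤ M := (norm_nonneg _).trans (hM 0 ⟨le_rfl, zero_le_one⟩)
  have hforce (t : ℝ) (ht : t ∈ Icc (0:ℝ) 1) :
      ‖(δ * t) • (1 : Matrix (Fin m) (Fin m) ℝ)‖ ≤ |δ| * ‖(1 : Matrix (Fin m) (Fin m) ℝ)‖ := by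
    rw [norm_smul, Real.norm_eq_abs, abs_mul, abs_of_nonneg ht.1]
    gcongr
    exact mul_le_of_le_one_right (abs_nonneg δ) ht.2
  refine ⟨⟨_, fun n t ht => norm_le_two_pow_mul_of_eq_add_integral (by positivity) (hkn n)
    (hφncont n) hforce (hφn n) N (hN n) ht⟩, ?_⟩
  have hdist (n : ℕ) (t : ℝ) (ht : t ∈ Icc (0:ℝ) 1) :
      ‖φn n t - φ t‖ ≤ 2 ^ (N + 1) * (2 * M * ∫ s in Icc (0:ℝ) 1, ‖kn n s - k s‖) :=
    norm_le_two_pow_mul_of_eq_add_integral (ψ := fun t => φn n t - φ t) (by positivity) (hkn n)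
      ((hφncont n).sub hφcont)
      (fun t ht => norm_integral_mul_add_mul_le ((hkn n).sub hk) hφcont hM ht)
      (fun t ht => sub_eq_integral_add_integral (hkn n) hk (hφncont n) hφcont (hφn n) hφ ht)
      N (hN n) ht
  have hlim : Tendsto (fun n => 2 ^ (N + 1) * (2 * M * ∫ s in Icc (0:ℝ) 1, ‖kn n s - k s‖))
      atTop (𝓝 0) := by
    simpa using (hL1.const_mul (2 * M)).const_mul (2 ^ (N + 1))
  intro ε hε
  obtain ⟨N', hN'⟩ := eventually_atTop.1 (hlim.eventually (gt_mem_nhds hε))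
  exact ⟨N', fun n hn t ht => (hdist n t ht).trans_lt (hN' n hn)⟩

theorem stmt_16 (m : ℕ) (hm : 1 ≤ m) (δ : ℝ) (hδ : 0 < δ)
    (k : ℝ → Matrix (Fin m) (Fin m) ℝ)
    (kn : ℕ → ℝ → Matrix (Fin m) (Fin m) ℝ)
    (hkmeas : ∀ i j, Measurable fun s => k s i j)
    (hknmeas : ∀ n, ∀ i j, Measurable fun s => kn n s i j)
    (hksymm : ∀ s ∈ Set.Icc (0:ℝ) 1, (k s).IsSymm)
    (hknsymm : ∀ n, ∀ s ∈ Set.Icc (0:ℝ) 1, (kn n s).IsSymm)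
    (hkL2 : IntegrableOn (fun s => ‖k s‖ ^ 2) (Set.Icc 0 1))
    (hknL2 : ∀ n, IntegrableOn (fun s => ‖kn n s‖ ^ 2) (Set.Icc 0 1))
    (hconv : Tendsto (fun n => ∫ s in Set.Icc (0:ℝ) 1, ‖kn n s - k s‖ ^ 2) atTop (nhds 0))
    (φ : ℝ → Matrix (Fin m) (Fin m) ℝ)
    (φn : ℕ → ℝ → Matrix (Fin m) (Fin m) ℝ)
    (hφcont : ContinuousOn φ (Set.Icc 0 1))
    (hφncont : ∀ n, ContinuousOn (φn n) (Set.Icc 0 1))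
    (hφ : ∀ t ∈ Set.Icc (0:ℝ) 1,
      φ t = (δ * t) • (1 : Matrix (Fin m) (Fin m) ℝ)
          + ∫ s in (0:ℝ)..t, (k s * φ s + φ s * k s))
    (hφn : ∀ n, ∀ t ∈ Set.Icc (0:ℝ) 1,
      φn n t = (δ * t) • (1 : Matrix (Fin m) (Fin m) ℝ)
          + ∫ s in (0:ℝ)..t, (kn n s * φn n s + φn n s * kn n s)) :
    (∃ C : ℝ, ∀ n, ∀ t ∈ Set.Icc (0:ℝ) 1, ‖φn n t‖ ≤ C) ∧
    (∀ ε > (0:ℝ), ∃ N : ℕ, ∀ n ≥ N, ∀ t ∈ Set.Icc (0:ℝ) 1, ‖φn n t - φ t‖ < ε) :=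
  stmt_16_general m δ k kn hkmeas hknmeas hkL2 hknL2 hconv φ φn hφcont hφncont hφ hφn
end

section
/- Let c > 0 and let g : [0,1] → ℝ be continuous with g(0) = 0 and g(t) > 0 for t ∈ (0,1], absolutely continuous with g(t) = ∫₀ᵗ g'(s) ds for an integrable g'. If ∫₀¹ (g'(s) − c)²/g(s) ds < ∞, then g(t)/t → c as t → 0⁺. -/
/-!
Write `F t = ∫₀ᵗ (g' - c)² / g`. Since `g t - c t = ∫₀ᵗ (g' - c)`, Cauchy–Schwarz with weight `g`
gives `|g t - c t| ≤ √(F t) · √(∫₀ᵗ g)`. Applied at a maximum point of `g` on `[0, t]`, this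
inequality bootstraps into the linear growth bound `g ≤ K t` on `[0, t]`, with
`K = (√(F 1) + √|c|)²`. Hence `∫₀ᵗ g ≤ K t²` and `|g t / t - c| ≤ √K · √(F t)`, which tends to `0`
with `F t`.
-/

open MeasureTheory Filter Set

theorem abs_integral_le_sqrt_integral_sq_div_mul_sqrt_integral {α : Type*} [MeasurableSpace α]
    {μ : Measure α} {f w : α → ℝ} (hf : AEStronglyMeasurable f μ) (hw : Integrable w μ)
    (hw_pos : ∀ᵐ x ∂μ, 0 < w x) (hfw : Integrable (fun x => f x ^ 2 / w x) μ) :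
    |∫ x, f x ∂μ| ≤ √(∫ x, f x ^ 2 / w x ∂μ) * √(∫ x, w x ∂μ) := by
  set u : α → ℝ := fun x => |f x| / √(w x)
  set v : α → ℝ := fun x => √(w x)
  have hv_meas : AEStronglyMeasurable v μ :=
    Real.continuous_sqrt.comp_aestronglyMeasurable hw.aestronglyMeasurable
  have hu_meas : AEStronglyMeasurable u μ :=
    (hf.norm.aemeasurable.div hv_meas.aemeasurable).aestronglyMeasurable
  have hu_sq : (fun x => u x ^ 2) =ᵐ[μ] fun x => f x ^ 2 / w x := by
    filter_upwards [hw_pos] with x hx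
    simp only [u, div_pow, sq_abs, Real.sq_sqrt hx.le]
  have hv_sq : (fun x => v x ^ 2) =ᵐ[μ] w := by
    filter_upwards [hw_pos] with x hx
    exact Real.sq_sqrt hx.le
  have hu : MemLp u (ENNReal.ofReal 2) μ := by
    rw [ENNReal.ofReal_ofNat, memLp_two_iff_integrable_sq hu_meas]
    exact hfw.congr hu_sq.symm
  have hv : MemLp v (ENNReal.ofReal 2) μ := by
    rw [ENNReal.ofReal_ofNat, memLp_two_iff_integrable_sq hv_meas]
    exact hw.congr hv_sq.symm
  have holder := integral_mul_le_Lp_mul_Lq_of_nonneg Real.HolderConjugate.two_two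
    (.of_forall fun x => by positivity) (.of_forall fun x => by positivity) hu hv
  have huv : (fun x => u x * v x) =ᵐ[μ] fun x => |f x| := by
    filter_upwards [hw_pos] with x hx
    exact div_mul_cancel₀ _ (Real.sqrt_pos.2 hx).ne'
  simp only [Real.rpow_two] at holder
  rw [integral_congr_ae huv, integral_congr_ae hu_sq, integral_congr_ae hv_sq,
    ← Real.sqrt_eq_rpow, ← Real.sqrt_eq_rpow] at holder
  exact (abs_integral_le_integral_abs).trans holder

theorem abs_sub_mul_le_sqrt_mul_sqrt {c t : ℝ} {g g' : ℝ → ℝ} (ht : 0 ≤ t)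
    (hg : IntegrableOn g (Ioc 0 t)) (hg_pos : ∀ s ∈ Ioc 0 t, 0 < g s)
    (hg' : IntegrableOn g' (Ioc 0 t)) (hgt : g t = ∫ s in (0:ℝ)..t, g' s)
    (hfin : IntegrableOn (fun s => (g' s - c) ^ 2 / g s) (Ioc 0 t)) :
    |g t - c * t| ≤ √(∫ s in Ioc 0 t, (g' s - c) ^ 2 / g s) * √(∫ s in Ioc 0 t, g s) := by
  have hrep : g t - c * t = ∫ s in Ioc 0 t, (g' s - c) := by
    rw [integral_sub hg' (integrableOn_const measure_Ioc_lt_top.ne), setIntegral_const,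
      Real.volume_real_Ioc_of_le ht, hgt, intervalIntegral.integral_of_le ht, smul_eq_mul,
      sub_zero, mul_comm]
  rw [hrep]
  exact abs_integral_le_sqrt_integral_sq_div_mul_sqrt_integral
    (hg'.aestronglyMeasurable.sub aestronglyMeasurable_const) hg
    ((ae_restrict_mem measurableSet_Ioc).mono hg_pos) hfin

theorem le_sq_mul_of_sub_mul_le_sqrt {a c x y : ℝ} (ha : 0 ≤ a) (hx : 0 ≤ x) (hy : 0 ≤ y)
    (h : y - c * x ≤ a * √(y * x)) : y ≤ (a + √|c|) ^ 2 * x := by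
  obtain ⟨m, hm, rfl⟩ : ∃ m, 0 ≤ m ∧ m ^ 2 = y := ⟨√y, Real.sqrt_nonneg y, Real.sq_sqrt hy⟩
  obtain ⟨r, hr, rfl⟩ : ∃ r, 0 ≤ r ∧ r ^ 2 = x := ⟨√x, Real.sqrt_nonneg x, Real.sq_sqrt hx⟩
  have hb : 0 ≤ √|c| := Real.sqrt_nonneg _
  have hb2 : √|c| ^ 2 = |c| := Real.sq_sqrt (abs_nonneg c)
  rw [Real.sqrt_mul (by positivity), Real.sqrt_sq hm, Real.sqrt_sq hr] at h
  have hquad : m ^ 2 ≤ √|c| ^ 2 * r ^ 2 + a * r * m := by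
    nlinarith [mul_le_mul_of_nonneg_right (le_abs_self c) (sq_nonneg r)]
  have hmr : m ≤ (a + √|c|) * r := by
    by_contra! hlt
    have hm_pos : 0 < m := (mul_nonneg (add_nonneg ha hb) hr).trans_lt hlt
    nlinarith [mul_nonneg (mul_nonneg ha hb) (mul_nonneg hr hr),
      mul_lt_mul_of_pos_right hlt (add_pos_of_pos_of_nonneg hm_pos (mul_nonneg hb hr))]
  calc m ^ 2 ≤ ((a + √|c|) * r) ^ 2 := pow_le_pow_left₀ hm hmr 2
    _ = (a + √|c|) ^ 2 * r ^ 2 := mul_pow _ _ _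

theorem setIntegral_Ioc_le_mul {g : ℝ → ℝ} {t M : ℝ} (ht : 0 ≤ t)
    (hg : ∀ s ∈ Ioc 0 t, 0 ≤ g s ∧ g s ≤ M) : ∫ s in Ioc 0 t, g s ≤ M * t := by
  have h := norm_setIntegral_le_of_norm_le_const (C := M) (measure_Ioc_lt_top (μ := volume))
    fun s hs => (Real.norm_of_nonneg (hg s hs).1).trans_le (hg s hs).2
  rw [Real.volume_real_Ioc_of_le ht, sub_zero] at h
  exact (le_abs_self _).trans h

theorem le_mul_of_sub_mul_le_sqrt_setIntegral {T c A : ℝ} {g : ℝ → ℝ} (hA : 0 ≤ A)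
    (hg : ContinuousOn g (Icc 0 T)) (hg0 : g 0 = 0) (hg_nonneg : ∀ t ∈ Ioc 0 T, 0 ≤ g t)
    (h : ∀ t ∈ Ioc 0 T, g t - c * t ≤ A * √(∫ s in Ioc 0 t, g s)) :
    ∀ t ∈ Icc 0 T, ∀ s ∈ Icc 0 t, g s ≤ (A + √|c|) ^ 2 * t := by
  intro t ht
  obtain ⟨x, hx, hmax⟩ := isCompact_Icc.exists_isMaxOn (nonempty_Icc.2 ht.1)
    (hg.mono (Icc_subset_Icc_right ht.2))
  suffices hgx : g x ≤ (A + √|c|) ^ 2 * t from fun s hs => (hmax hs).trans hgx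
  rcases hx.1.eq_or_lt with rfl | hx0
  · rw [hg0]; exact mul_nonneg (sq_nonneg _) ht.1
  have hxT : x ∈ Ioc 0 T := ⟨hx0, hx.2.trans ht.2⟩
  have hint : ∫ s in Ioc 0 x, g s ≤ g x * x := setIntegral_Ioc_le_mul hx0.le fun s hs =>
    ⟨hg_nonneg s ⟨hs.1, hs.2.trans hxT.2⟩, hmax ⟨hs.1.le, hs.2.trans hx.2⟩⟩
  have hgrowth : g x - c * x ≤ A * √(g x * x) :=
    (h x hxT).trans (mul_le_mul_of_nonneg_left (Real.sqrt_le_sqrt hint) hA)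
  calc g x ≤ (A + √|c|) ^ 2 * x := le_sq_mul_of_sub_mul_le_sqrt hA hx0.le (hg_nonneg x hxT) hgrowth
    _ ≤ (A + √|c|) ^ 2 * t := mul_le_mul_of_nonneg_left hx.2 (sq_nonneg _)

theorem abs_div_sub_le_of_abs_sub_mul_le {T c A : ℝ} {g φ : ℝ → ℝ}
    (hg : ContinuousOn g (Icc 0 T)) (hg0 : g 0 = 0) (hg_nonneg : ∀ t ∈ Ioc 0 T, 0 ≤ g t)
    (hφ : ∀ t ∈ Ioc 0 T, 0 ≤ φ t ∧ φ t ≤ A)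
    (h : ∀ t ∈ Ioc 0 T, |g t - c * t| ≤ φ t * √(∫ s in Ioc 0 t, g s)) :
    ∀ t ∈ Ioc 0 T, |g t / t - c| ≤ (A + √|c|) * φ t := by
  intro t ht
  have hA : 0 ≤ A := (hφ t ht).1.trans (hφ t ht).2
  have hbound := le_mul_of_sub_mul_le_sqrt_setIntegral hA hg hg0 hg_nonneg fun x hx =>
    (le_abs_self _).trans ((h x hx).trans
      (mul_le_mul_of_nonneg_right (hφ x hx).2 (Real.sqrt_nonneg _)))
  have hint : ∫ s in Ioc 0 t, g s ≤ ((A + √|c|) * t) ^ 2 := by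
    refine (setIntegral_Ioc_le_mul ht.1.le fun s hs =>
      ⟨hg_nonneg s ⟨hs.1, hs.2.trans ht.2⟩, hbound t (Ioc_subset_Icc_self ht) s
        (Ioc_subset_Icc_self hs)⟩).trans_eq ?_
    ring
  have hsqrt : √(∫ s in Ioc 0 t, g s) ≤ (A + √|c|) * t :=
    Real.sqrt_le_left (mul_nonneg (add_nonneg hA (Real.sqrt_nonneg _)) ht.1.le) |>.mpr hint
  have ht0 : 0 < t := ht.1
  rw [div_sub' ht0.ne', abs_div, abs_of_pos ht0, div_le_iff₀ ht0, mul_comm t c]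
  calc |g t - c * t| ≤ φ t * ((A + √|c|) * t) :=
        (h t ht).trans (mul_le_mul_of_nonneg_left hsqrt (hφ t ht).1)
    _ = (A + √|c|) * φ t * t := by ring

theorem tendsto_setIntegral_Ioc_nhdsGT {f : ℝ → ℝ} {a b : ℝ} (hab : a < b)
    (hf : IntegrableOn f (Icc a b)) :
    Tendsto (fun t => ∫ s in Ioc a t, f s) (nhdsWithin a (Ioi a)) (nhds 0) := by
  have h := (intervalIntegral.continuousOn_primitive hf a (left_mem_Icc.2 hab.le)).tendsto
  rw [Ioc_self, Measure.restrict_empty, integral_zero_measure] at h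
  rw [← nhdsWithin_Ioc_eq_nhdsGT hab]
  exact h.mono_left (nhdsWithin_mono a Ioc_subset_Icc_self)

theorem stmt_18_general (c : ℝ)
    (g g' : ℝ → ℝ)
    (hgcont : ContinuousOn g (Set.Icc 0 1))
    (hg0 : g 0 = 0)
    (hgpos : ∀ t ∈ Set.Ioc (0:ℝ) 1, 0 < g t)
    (hg'int : IntegrableOn g' (Set.Icc 0 1))
    (hAC : ∀ t ∈ Set.Icc (0:ℝ) 1, g t = ∫ s in (0:ℝ)..t, g' s)
    (hfin : IntegrableOn (fun s => (g' s - c) ^ 2 / g s) (Set.Icc 0 1)) :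
    Tendsto (fun t => g t / t) (nhdsWithin 0 (Set.Ioi 0)) (nhds c) := by
  set F : ℝ → ℝ := fun t => ∫ s in Ioc 0 t, (g' s - c) ^ 2 / g s
  have hF : ∀ t ∈ Ioc (0:ℝ) 1, 0 ≤ F t ∧ F t ≤ F 1 := by
    have h_nonneg : ∀ s ∈ Ioc (0:ℝ) 1, 0 ≤ (g' s - c) ^ 2 / g s := fun s hs =>
      div_nonneg (sq_nonneg _) (hgpos s hs).le
    refine fun t ht => ⟨setIntegral_nonneg measurableSet_Ioc fun s hs =>
      h_nonneg s ⟨hs.1, hs.2.trans ht.2⟩, setIntegral_mono_set (hfin.mono_set Ioc_subset_Icc_self)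
      ((ae_restrict_mem measurableSet_Ioc).mono h_nonneg) (Ioc_subset_Ioc_right ht.2).eventuallyLE⟩
  have hCS : ∀ t ∈ Ioc (0:ℝ) 1, |g t - c * t| ≤ √(F t) * √(∫ s in Ioc 0 t, g s) := by
    intro t ht
    have hsub : Ioc 0 t ⊆ Icc (0:ℝ) 1 := Ioc_subset_Icc_self.trans (Icc_subset_Icc_right ht.2)
    exact abs_sub_mul_le_sqrt_mul_sqrt ht.1.le (hgcont.integrableOn_Icc.mono_set hsub)
      (fun s hs => hgpos s ⟨hs.1, hs.2.trans ht.2⟩) (hg'int.mono_set hsub)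
      (hAC t (Ioc_subset_Icc_self ht)) (hfin.mono_set hsub)
  have hbound := abs_div_sub_le_of_abs_sub_mul_le hgcont hg0 (fun t ht => (hgpos t ht).le)
    (fun t ht => ⟨Real.sqrt_nonneg _, Real.sqrt_le_sqrt (hF t ht).2⟩) hCS
  have hF0 : Tendsto (fun t => (√(F 1) + √|c|) * √(F t)) (nhdsWithin 0 (Ioi 0)) (nhds 0) := by
    simpa using ((tendsto_setIntegral_Ioc_nhdsGT one_pos hfin).sqrt).const_mul (√(F 1) + √|c|)
  rw [← tendsto_sub_nhds_zero_iff]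
  refine squeeze_zero_norm' ?_ hF0
  filter_upwards [Ioc_mem_nhdsGT one_pos] with t ht using hbound t ht

theorem stmt_18 (c : ℝ) (hc : 0 < c)
    (g g' : ℝ → ℝ)
    (hgcont : ContinuousOn g (Set.Icc 0 1))
    (hg0 : g 0 = 0)
    (hgpos : ∀ t ∈ Set.Ioc (0:ℝ) 1, 0 < g t)
    (hg'int : IntegrableOn g' (Set.Icc 0 1))
    (hAC : ∀ t ∈ Set.Icc (0:ℝ) 1, g t = ∫ s in (0:ℝ)..t, g' s)
    (hfin : IntegrableOn (fun s => (g' s - c) ^ 2 / g s) (Set.Icc 0 1)) :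
    Tendsto (fun t => g t / t) (nhdsWithin 0 (Set.Ioi 0)) (nhds c) :=
  stmt_18_general c g g' hgcont hg0 hgpos hg'int hAC hfin
end
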